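/- Let (K,e,T) be an ordered transexponential field, with m ∈ ℕ ∪ {0}, and assume e' = e. Then for every x in the interval [m, m+1] of K, T is differentiable at x with T'(x) = e(x−m) · ∏_{i=1}^{m} e(T(x−i)). In particular T is continuously differentiable on the valuation ring R_v. -/

import Mathlib

/-- An ordered transexponential field structure on an ordered field `K`:
`e` is a (GAT₁)-exponential and `T` a compatible transexponential. -/
structure IsOTF {K : Type*} [Field K] [LinearOrder K] [IsStrictOrderedRing K] (e T : K → K) : Prop where
  e_pos : ∀ x : K, 0 < e x
  e_mono : StrictMono e
  e_add : ∀ x y : K, e (x + y) = e x * e y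
  e_surj : ∀ y : K, 0 < y → ∃ x, e x = y
  e_GA : ∀ (n : ℕ) (a : K), (n : K) ^ 2 ≤ a → a ^ n < e a
  e_T1 : ∀ a : K, 0 < |a| → |a| ≤ 1 → |e a - (1 + a)| < a ^ 2
  T_pos : ∀ x : K, 0 < T x
  T_mono : StrictMono T
  T_surj : ∀ y : K, 0 < y → ∃ x, T x = y
  T_eq_e : ∀ x : K, 0 ≤ x → x ≤ 1 → T x = e x
  T_succ : ∀ x : K, 0 < x → T (x + 1) = e (T x)
  T_neg : ∀ x : K, x < 0 → T x * T (-x) = 1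

/-- First-order ε–δ differentiability: f has derivative b at a. -/
def HasDerivAtOF {K : Type*} [Field K] [LinearOrder K] [IsStrictOrderedRing K] (f : K → K) (a b : K) : Prop :=
  ∀ ε : K, 0 < ε → ∃ δ : K, 0 < δ ∧ ∀ h : K, 0 < |h| → |h| < δ →
    |(f (a + h) - f a) / h - b| < ε

/-- First-order ε–δ continuity of g at x. -/
def ContinuousAtOF {K : Type*} [Field K] [LinearOrder K] [IsStrictOrderedRing K] (g : K → K) (x : K) : Prop :=
  ∀ ε : K, 0 < ε → ∃ δ : K, 0 < δ ∧ ∀ y : K, |y - x| < δ → |g y - g x| < ε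

/-!
On `[-1, 1]` the transexponential `T` coincides with `e`; it satisfies `T (x + 1) = e (T x)` for
`x ≥ 0` and `T x * T (-x) = 1`. Hence `T' = e` on `(-1, 1)`; at `1` the one-sided pieces `e` and
`y ↦ e (e (y - 1))` both have derivative `e 1`; and the chain rule carries differentiability from
`x ≥ 0` to `x + 1` with `T' (x + 1) = e (T x) * T' x`, which unfolds to the product formula.
Negative points reduce to positive ones through `T x = (T (-x))⁻¹`. The same recursions, read on
a neighbourhood of each point of `R_v`, give continuity of `T'` there.

The ε–δ notions are those of the order topology on `K`, where differentiability at `a` amounts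
to Carathéodory's condition `f y = f a + (y - a) * φ y` with `φ` continuous at `a`; in that form
the chain rule and the derivative of inversion are immediate.
-/

open Filter Topology Set

theorem Finset.prod_Icc_one_succ {M : Type*} [CommMonoid M] (g : ℕ → M) (m : ℕ) :
    ∏ i ∈ Finset.Icc 1 (m + 1), g i = g 1 * ∏ i ∈ Finset.Icc 1 m, g (i + 1) := by
  induction m with
  | zero => simp
  | succ m ih =>
    rw [Finset.prod_Icc_succ_top (by omega), ih, Finset.prod_Icc_succ_top (by omega), mul_assoc]

theorem exists_nat_le_le_add_one {R : Type*} [Semiring R] [LinearOrder R] [IsOrderedRing R]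
    {x : R} (n : ℕ) (hx₀ : 0 ≤ x) (hxn : x ≤ n) :
    ∃ m : ℕ, (m : R) ≤ x ∧ x ≤ m + 1 := by
  induction n with
  | zero =>
    have hx : x ≤ 0 := by simpa using hxn
    exact ⟨0, by simpa using hx₀, by simpa using hx.trans zero_le_one⟩
  | succ n ih =>
    rcases le_or_gt x n with hx | hx
    · exact ih hx
    · exact ⟨n, hx.le, by simpa using hxn⟩

section

variable {K : Type*} [Field K] [LinearOrder K] [IsStrictOrderedRing K]

section OrderTopology

variable [TopologicalSpace K] [OrderTopology K] {f g : K → K} {a b : K}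

theorem continuousAtOF_iff_continuousAt : ContinuousAtOF g a ↔ ContinuousAt g a :=
  ((nhds_basis_abs_sub_lt a).tendsto_iff (nhds_basis_abs_sub_lt (g a))).symm

theorem hasDerivAtOF_iff_tendsto_slope :
    HasDerivAtOF f a b ↔ Tendsto (slope f a) (𝓝[≠] a) (𝓝 b) := by
  rw [((nhdsWithin_hasBasis (nhds_basis_abs_sub_lt a) _).tendsto_iff (nhds_basis_abs_sub_lt b))]
  refine forall₂_congr fun ε _ => exists_congr fun δ => and_congr_right fun _ => ?_
  constructor
  · rintro H y ⟨hy, hya : y ≠ a⟩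
    simpa [slope_def_field] using H (y - a) (abs_pos.2 (sub_ne_zero.2 hya)) hy
  · intro H h h₀ hδ
    simpa [slope_def_field] using H (a + h) ⟨by simpa using hδ, by simpa using abs_pos.1 h₀⟩

theorem hasDerivAtOF_iff_exists_continuousAt :
    HasDerivAtOF f a b ↔
      ∃ φ : K → K, ContinuousAt φ a ∧ φ a = b ∧
        ∀ᶠ y in 𝓝 a, f y = f a + (y - a) * φ y := by
  classical
  rw [hasDerivAtOF_iff_tendsto_slope]
  constructor
  · intro h
    refine ⟨Function.update (slope f a) a b, continuousAt_update_same.2 h, by simp,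
      Eventually.of_forall fun y => ?_⟩
    rcases eq_or_ne y a with rfl | hy
    · simp
    · rw [Function.update_of_ne hy, slope_def_field]
      field_simp [sub_ne_zero.2 hy]
      ring
  · rintro ⟨φ, hφ, rfl, hf⟩
    refine (hφ.tendsto.mono_left nhdsWithin_le_nhds).congr' ?_
    filter_upwards [nhdsWithin_le_nhds hf, self_mem_nhdsWithin] with y hy (hya : y ≠ a)
    rw [slope_def_field, hy]
    field_simp [sub_ne_zero.2 hya]
    ring

theorem HasDerivAtOF.continuousAt (h : HasDerivAtOF f a b) : ContinuousAt f a := by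
  obtain ⟨φ, hφ, -, hf⟩ := hasDerivAtOF_iff_exists_continuousAt.1 h
  exact (continuousAt_const.add ((continuousAt_id.sub continuousAt_const).mul hφ)).congr
    (hf.mono fun y hy => hy.symm)

end OrderTopology

section
variable {f g : K → K} {a b c : K}

theorem HasDerivAtOF.unique (h : HasDerivAtOF f a b) (h' : HasDerivAtOF f a c) : b = c := by
  let _ := Preorder.topology K
  have _ : OrderTopology K := ⟨rfl⟩
  rw [hasDerivAtOF_iff_tendsto_slope] at h h'
  exact tendsto_nhds_unique h h'

theorem HasDerivAtOF.comp (hf : HasDerivAtOF f (g a) c) (hg : HasDerivAtOF g a b) :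
    HasDerivAtOF (fun y => f (g y)) a (c * b) := by
  let _ := Preorder.topology K
  have _ : OrderTopology K := ⟨rfl⟩
  have hgc := hg.continuousAt
  obtain ⟨φ, hφ, rfl, hfφ⟩ := hasDerivAtOF_iff_exists_continuousAt.1 hf
  obtain ⟨ψ, hψ, rfl, hgψ⟩ := hasDerivAtOF_iff_exists_continuousAt.1 hg
  refine hasDerivAtOF_iff_exists_continuousAt.2
    ⟨fun y => φ (g y) * ψ y, (hφ.comp hgc).mul hψ, rfl, ?_⟩
  filter_upwards [hgc.tendsto.eventually hfφ, hgψ] with y hfy hgy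
  rw [hfy, hgy]
  ring

theorem HasDerivAtOF.of_eqOn_Ioc_Ico {f₁ f₂ : K → K} {l u : K} (h₁ : HasDerivAtOF f₁ a b)
    (h₂ : HasDerivAtOF f₂ a b) (hl : l < a) (hu : a < u) (hf₁ : EqOn f f₁ (Ioc l a))
    (hf₂ : EqOn f f₂ (Ico a u)) : HasDerivAtOF f a b := by
  let _ := Preorder.topology K
  have _ : OrderTopology K := ⟨rfl⟩
  rw [hasDerivAtOF_iff_tendsto_slope] at *
  rw [← nhdsLT_sup_nhdsGT]
  refine ((h₁.mono_left (nhdsWithin_mono _ fun y (hy : y < a) => hy.ne)).congr' ?_).sup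
    ((h₂.mono_left (nhdsWithin_mono _ fun y (hy : a < y) => hy.ne')).congr' ?_)
  · filter_upwards [Ioo_mem_nhdsLT hl] with y hy
    rw [slope_def_field, slope_def_field, hf₁ ⟨hy.1, hy.2.le⟩, hf₁ ⟨hl, le_rfl⟩]
  · filter_upwards [Ioo_mem_nhdsGT hu] with y hy
    rw [slope_def_field, slope_def_field, hf₂ ⟨hy.1.le, hy.2⟩, hf₂ ⟨le_rfl, hu⟩]

theorem HasDerivAtOF.congr_of_eqOn_Ioo {l u : K} (h : HasDerivAtOF g a b)
    (hfg : EqOn f g (Ioo l u)) (ha : a ∈ Ioo l u) : HasDerivAtOF f a b :=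
  h.of_eqOn_Ioc_Ico h ha.1 ha.2 (hfg.mono (Ioc_subset_Ioo_right ha.2))
    (hfg.mono (Ico_subset_Ioo_left ha.1))

theorem hasDerivAtOF_sub_const (c a : K) : HasDerivAtOF (fun y => y - c) a 1 := by
  intro ε hε
  refine ⟨1, one_pos, fun h h₀ _ => ?_⟩
  rwa [show (a + h - c - (a - c)) / h - 1 = 0 by field_simp [abs_pos.1 h₀]; ring, abs_zero]

theorem hasDerivAtOF_neg (a : K) : HasDerivAtOF (fun y => -y) a (-1) := by
  intro ε hε
  refine ⟨1, one_pos, fun h h₀ _ => ?_⟩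
  rwa [show (-(a + h) - -a) / h - -1 = 0 by field_simp [abs_pos.1 h₀]; ring, abs_zero]

theorem hasDerivAtOF_inv (hc : c ≠ 0) : HasDerivAtOF (fun y => y⁻¹) c (-(c ^ 2)⁻¹) := by
  let _ := Preorder.topology K
  have _ : OrderTopology K := ⟨rfl⟩
  refine hasDerivAtOF_iff_exists_continuousAt.2 ⟨fun y => -(y * c)⁻¹,
    ((continuousAt_id.mul continuousAt_const).inv₀ (mul_ne_zero hc hc)).neg, by simp [sq], ?_⟩
  filter_upwards [eventually_ne_nhds hc] with y hy
  field_simp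
  ring

end

open Classical in
noncomputable def derivOF (f : K → K) (x : K) : K :=
  if h : ∃ b, HasDerivAtOF f x b then h.choose else 0

theorem HasDerivAtOF.derivOF_eq {f : K → K} {a b : K} (h : HasDerivAtOF f a b) :
    derivOF f a = b := by
  have hex : ∃ b, HasDerivAtOF f a b := ⟨b, h⟩
  rw [derivOF, dif_pos hex]
  exact hex.choose_spec.unique h

namespace IsOTF

variable {e T : K → K} {x d : K}

theorem e_zero (h : IsOTF e T) : e 0 = 1 := by
  have h00 := h.e_add 0 0
  rw [add_zero] at h00
  exact (mul_eq_left₀ (h.e_pos 0).ne').1 h00.symm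

theorem T_eq_e_of_abs_le_one (h : IsOTF e T) (hx : |x| ≤ 1) : T x = e x := by
  obtain ⟨hx₁, hx₂⟩ := abs_le.1 hx
  rcases le_or_gt 0 x with hx₀ | hx₀
  · exact h.T_eq_e x hx₀ hx₂
  · have hT := h.T_neg x hx₀
    rw [h.T_eq_e (-x) (by linarith) (by linarith)] at hT
    refine mul_right_cancel₀ (h.e_pos (-x)).ne' (hT.trans ?_)
    rw [← h.e_add, add_neg_cancel, h.e_zero]

theorem T_zero (h : IsOTF e T) : T 0 = 1 := by
  rw [h.T_eq_e_of_abs_le_one (by simp), h.e_zero]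

theorem T_add_one (h : IsOTF e T) (hx : 0 ≤ x) : T (x + 1) = e (T x) := by
  rcases hx.eq_or_lt with rfl | hx
  · rw [zero_add, h.T_zero, h.T_eq_e_of_abs_le_one (by simp)]
  · exact h.T_succ x hx

theorem T_eq_inv_T_neg (h : IsOTF e T) (x : K) : T x = (T (-x))⁻¹ := by
  refine eq_inv_of_mul_eq_one_left ?_
  rcases lt_trichotomy x 0 with hx | rfl | hx
  · exact h.T_neg x hx
  · rw [neg_zero, h.T_zero, one_mul]
  · simpa [mul_comm] using h.T_neg (-x) (neg_lt_zero.2 hx)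

theorem hasDerivAtOF_T_of_abs_lt_one (h : IsOTF e T) (he : ∀ y, HasDerivAtOF e y (e y))
    (hx : |x| < 1) : HasDerivAtOF T x (e x) :=
  (he x).congr_of_eqOn_Ioo (fun _ hy => h.T_eq_e_of_abs_le_one (abs_le.2 ⟨hy.1.le, hy.2.le⟩))
    (abs_lt.1 hx)

theorem hasDerivAtOF_T_one (h : IsOTF e T) (he : ∀ y, HasDerivAtOF e y (e y)) :
    HasDerivAtOF T 1 (e 1) := by
  have hright : HasDerivAtOF (fun y => e (e (y - 1))) 1 (e 1) := by
    simpa [h.e_zero] using (he _).comp ((he _).comp (hasDerivAtOF_sub_const 1 1))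
  refine (he 1).of_eqOn_Ioc_Ico hright zero_lt_one one_lt_two (fun y hy => ?_) (fun y hy => ?_)
  · exact h.T_eq_e_of_abs_le_one (abs_le.2 ⟨by linarith [hy.1], hy.2⟩)
  · have hT := h.T_add_one (x := y - 1) (by linarith [hy.1])
    rw [sub_add_cancel] at hT
    rw [hT, h.T_eq_e_of_abs_le_one (abs_le.2 ⟨by linarith [hy.1], by linarith [hy.2]⟩)]

theorem hasDerivAtOF_T_add_one (h : IsOTF e T) (he : ∀ y, HasDerivAtOF e y (e y))
    (hx : 0 ≤ x) (hd : HasDerivAtOF T x d) : HasDerivAtOF T (x + 1) (e (T x) * d) := by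
  rcases hx.eq_or_lt with rfl | hx
  · rw [hd.unique (h.hasDerivAtOF_T_of_abs_lt_one he (by simp)), h.T_zero, h.e_zero, zero_add,
      mul_one]
    exact h.hasDerivAtOF_T_one he
  · have hshift : HasDerivAtOF (fun y => T (y - 1)) (x + 1) d := by
      simpa using HasDerivAtOF.comp (g := fun y => y - 1) (by simpa using hd)
        (hasDerivAtOF_sub_const 1 (x + 1))
    have hcomp : HasDerivAtOF (fun y => e (T (y - 1))) (x + 1) (e (T x) * d) := by
      simpa using (he _).comp hshift
    refine hcomp.congr_of_eqOn_Ioo (l := 1) (u := x + 2) (fun y hy => ?_)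
      ⟨by linarith, by linarith⟩
    have hT := h.T_add_one (x := y - 1) (by linarith [hy.1])
    rwa [sub_add_cancel] at hT

theorem hasDerivAtOF_T_neg (h : IsOTF e T) (hd : HasDerivAtOF T x d) :
    HasDerivAtOF T (-x) (d * T (-x) ^ 2) := by
  have hreflect : HasDerivAtOF (fun y => T (-y)) (-x) (d * -1) :=
    HasDerivAtOF.comp (g := fun y => -y) (by simpa using hd) (hasDerivAtOF_neg (-x))
  have hinv : HasDerivAtOF (fun y => (T (-y))⁻¹) (-x) (-(T x ^ 2)⁻¹ * (d * -1)) :=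
    HasDerivAtOF.comp (f := fun y => y⁻¹) (by simpa using hasDerivAtOF_inv (h.T_pos x).ne')
      hreflect
  convert hinv using 1
  · exact funext h.T_eq_inv_T_neg
  · rw [h.T_eq_inv_T_neg (-x), neg_neg]
    field_simp

theorem hasDerivAtOF_T_of_mem_Icc (h : IsOTF e T) (he : ∀ y, HasDerivAtOF e y (e y)) (m : ℕ) :
    ∀ x : K, (m : K) ≤ x → x ≤ m + 1 →
      HasDerivAtOF T x (e (x - m) * ∏ i ∈ Finset.Icc 1 m, e (T (x - i))) := by
  induction m with
  | zero =>
    intro x hx₀ hx₁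
    simp only [Nat.cast_zero, zero_add, sub_zero, Finset.Icc_eq_empty_of_lt,
      zero_lt_one, Finset.prod_empty, mul_one] at hx₀ hx₁ ⊢
    rcases hx₁.lt_or_eq with hx₁ | rfl
    · exact h.hasDerivAtOF_T_of_abs_lt_one he (abs_lt.2 ⟨by linarith, hx₁⟩)
    · exact h.hasDerivAtOF_T_one he
  | succ m ih =>
    intro x hx₀ hx₁
    push_cast at hx₀ hx₁
    have hd := h.hasDerivAtOF_T_add_one he (by linarith [m.cast_nonneg (α := K)])
      (ih (x - 1) (by linarith) (by linarith))
    rw [sub_add_cancel] at hd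
    convert hd using 1
    rw [Finset.prod_Icc_one_succ]
    push_cast
    simp only [sub_sub, add_comm (1 : K)]
    ring

theorem hasDerivAtOF_derivOF_T (h : IsOTF e T) (he : ∀ y, HasDerivAtOF e y (e y)) {n : ℕ}
    (hx : |x| ≤ n) : HasDerivAtOF T x (derivOF T x) := by
  have hnonneg : ∀ y : K, 0 ≤ y → y ≤ n → ∃ b, HasDerivAtOF T y b := fun y hy₀ hyn =>
    let ⟨m, hm₀, hm₁⟩ := exists_nat_le_le_add_one n hy₀ hyn
    ⟨_, h.hasDerivAtOF_T_of_mem_Icc he m y hm₀ hm₁⟩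
  obtain ⟨b, hb⟩ : ∃ b, HasDerivAtOF T x b := by
    rcases le_total 0 x with hx₀ | hx₀
    · exact hnonneg x hx₀ ((le_abs_self x).trans hx)
    · obtain ⟨b, hb⟩ := hnonneg (-x) (neg_nonneg.2 hx₀) ((neg_le_abs x).trans hx)
      exact ⟨_, by simpa using h.hasDerivAtOF_T_neg hb⟩
  rwa [hb.derivOF_eq]

theorem derivOF_T_of_abs_lt_one (h : IsOTF e T) (he : ∀ y, HasDerivAtOF e y (e y))
    (hx : |x| < 1) : derivOF T x = e x :=
  (h.hasDerivAtOF_T_of_abs_lt_one he hx).derivOF_eq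

theorem derivOF_T_add_one (h : IsOTF e T) (he : ∀ y, HasDerivAtOF e y (e y)) {n : ℕ}
    (hx₀ : 0 ≤ x) (hxn : x ≤ n) :
    derivOF T (x + 1) = e (T x) * derivOF T x :=
  (h.hasDerivAtOF_T_add_one he hx₀
    (h.hasDerivAtOF_derivOF_T he (abs_of_nonneg hx₀ ▸ hxn))).derivOF_eq

theorem derivOF_T_neg (h : IsOTF e T) (he : ∀ y, HasDerivAtOF e y (e y)) {n : ℕ}
    (hx : |x| ≤ n) : derivOF T (-x) = derivOF T x * T (-x) ^ 2 :=
  (h.hasDerivAtOF_T_neg (h.hasDerivAtOF_derivOF_T he hx)).derivOF_eq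

section OrderTopology

variable [TopologicalSpace K] [OrderTopology K]

theorem continuousAt_derivOF_T_of_abs_lt_one (h : IsOTF e T)
    (he : ∀ y, HasDerivAtOF e y (e y)) (hx : |x| < 1) : ContinuousAt (derivOF T) x := by
  refine (he x).continuousAt.congr ?_
  filter_upwards [Ioo_mem_nhds (abs_lt.1 hx).1 (abs_lt.1 hx).2] with y hy
  exact (h.derivOF_T_of_abs_lt_one he (abs_lt.2 hy)).symm

theorem continuousAt_e_T_sub_one_mul_derivOF_T_sub_one (h : IsOTF e T)
    (he : ∀ y, HasDerivAtOF e y (e y)) {n : ℕ} (hx₀ : 0 ≤ x - 1) (hxn : x - 1 ≤ n)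
    (hD : ContinuousAt (derivOF T) (x - 1)) :
    ContinuousAt (fun y => e (T (y - 1)) * derivOF T (y - 1)) x := by
  have hT := (h.hasDerivAtOF_derivOF_T he (abs_of_nonneg hx₀ ▸ hxn)).continuousAt
  have hsub : ContinuousAt (fun y : K => y - 1) x := continuousAt_id.sub continuousAt_const
  exact ((he _).continuousAt.comp (hT.comp_of_eq hsub rfl)).mul (hD.comp_of_eq hsub rfl)

theorem continuousAt_derivOF_T_one (h : IsOTF e T) (he : ∀ y, HasDerivAtOF e y (e y)) :
    ContinuousAt (derivOF T) 1 := by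
  have hD₁ : derivOF T 1 = e 1 := (h.hasDerivAtOF_T_one he).derivOF_eq
  rw [continuousAt_iff_continuous_left_right]
  constructor
  · refine (he 1).continuousAt.continuousWithinAt.congr_of_eventuallyEq ?_ hD₁
    filter_upwards [Ioc_mem_nhdsLE zero_lt_one] with y hy
    rcases hy.2.lt_or_eq with hy₁ | rfl
    · exact h.derivOF_T_of_abs_lt_one he (abs_lt.2 ⟨by linarith [hy.1], hy₁⟩)
    · exact hD₁
  · have hG := h.continuousAt_e_T_sub_one_mul_derivOF_T_sub_one he (n := 0) (x := 1)
      (by simp) (by simp)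
      (by simpa using h.continuousAt_derivOF_T_of_abs_lt_one he (x := 0) (by simp))
    refine hG.continuousWithinAt.congr_of_eventuallyEq ?_ ?_
    · filter_upwards [Ico_mem_nhdsGE one_lt_two] with y hy
      simpa using h.derivOF_T_add_one he (n := 1) (x := y - 1) (by linarith [hy.1])
        (by push_cast; linarith [hy.2])
    · simpa using h.derivOF_T_add_one he (n := 0) (x := 0) le_rfl (by simp)

theorem continuousAt_derivOF_T_of_nonneg (h : IsOTF e T) (he : ∀ y, HasDerivAtOF e y (e y))
    (n : ℕ) : ∀ x : K, 0 ≤ x → x ≤ n → ContinuousAt (derivOF T) x := by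
  induction n with
  | zero =>
    intro x hx₀ hxn
    have hx : x = 0 := le_antisymm (by simpa using hxn) hx₀
    exact h.continuousAt_derivOF_T_of_abs_lt_one he (by simp [hx])
  | succ n ih =>
    intro x hx₀ hxn
    push_cast at hxn
    rcases lt_trichotomy x 1 with hx | rfl | hx
    · exact h.continuousAt_derivOF_T_of_abs_lt_one he (abs_lt.2 ⟨by linarith, hx⟩)
    · exact h.continuousAt_derivOF_T_one he
    · refine (h.continuousAt_e_T_sub_one_mul_derivOF_T_sub_one he (n := n) (by linarith)
        (by linarith) (ih _ (by linarith) (by linarith))).congr ?_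
      filter_upwards [Ioo_mem_nhds hx (show x < n + 2 by linarith)] with y hy
      simpa using (h.derivOF_T_add_one he (n := n + 1) (x := y - 1) (by linarith [hy.1])
        (by push_cast; linarith [hy.2])).symm

theorem continuousAt_derivOF_T (h : IsOTF e T) (he : ∀ y, HasDerivAtOF e y (e y)) {n : ℕ}
    (hx : |x| ≤ n) : ContinuousAt (derivOF T) x := by
  rcases le_total 0 x with hx₀ | hx₀
  · exact h.continuousAt_derivOF_T_of_nonneg he n x hx₀ ((le_abs_self x).trans hx)
  · have hD := h.continuousAt_derivOF_T_of_nonneg he n (-x) (neg_nonneg.2 hx₀)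
      ((neg_le_abs x).trans hx)
    have hT := (h.hasDerivAtOF_derivOF_T he hx).continuousAt
    refine ((hD.comp continuousAt_neg).mul (hT.pow 2)).congr ?_
    filter_upwards [Ioo_mem_nhds (show -(n + 1 : K) < x by linarith [neg_abs_le x])
      (show x < n + 1 by linarith [le_abs_self x])] with y hy
    simpa using (h.derivOF_T_neg he (n := n + 1) (x := -y) (by
      rw [abs_neg]; push_cast; exact abs_le.2 ⟨hy.1.le, hy.2.le⟩)).symm

end OrderTopology

end IsOTF

end

/-- If e' = e, then for every m ∈ ℕ ∪ {0} and every x ∈ [m, m+1]_K, T is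
differentiable at x with T'(x) = e(x−m)·∏_{i=1}^{m} e(T(x−i)); in particular T
is continuously differentiable on the valuation ring R_v. -/
theorem stmt_14 {K : Type*} [Field K] [LinearOrder K] [IsStrictOrderedRing K] (e T : K → K)
    (hKT : IsOTF e T)
    (he : ∀ y : K, HasDerivAtOF e y (e y)) :
    (∀ (m : ℕ) (x : K), (m : K) ≤ x → x ≤ (m : K) + 1 →
      HasDerivAtOF T x (e (x - (m : K)) * ∏ i ∈ Finset.Icc 1 m, e (T (x - (i : K))))) ∧
    ∃ D : K → K,
      (∀ x : K, (∃ n : ℕ, |x| ≤ (n : K)) → HasDerivAtOF T x (D x)) ∧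
      (∀ x : K, (∃ n : ℕ, |x| ≤ (n : K)) → ContinuousAtOF D x) := by
  refine ⟨hKT.hasDerivAtOF_T_of_mem_Icc he, derivOF T,
    fun x ⟨n, hn⟩ => hKT.hasDerivAtOF_derivOF_T he hn, fun x ⟨n, hn⟩ => ?_⟩
  let _ := Preorder.topology K
  have _ : OrderTopology K := ⟨rfl⟩
  exact continuousAtOF_iff_continuousAt.2 (hKT.continuousAt_derivOF_T he hn)
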